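/- Let δ ≤ y < 1 satisfy the branch conditions y < δ^(β1/α2), δ^(−β1/α2)·y > δ^(β1/α1), and (δ^(−β1/α2)·y)^(−α1/β1)·δ ≥ δ^(α1/β2) (so the g-orbit of (1, y; E) follows the state pattern E → S → R → E). If g³(1, y; E) = (1, y; E), then y = δ^((1/α1 + 1/α2)/(1/β1 + 1/β2)). Hence for fixed parameter values there is at most one period-two orbit of the first-return map of type E → S → R → E. -/

import Mathlib

/-- The discrete state of a cow: eating, resting (lying down), or standing. -/
inductive CowState
  | E | R | S
deriving DecidableEq

open CowState

/-- The Poincaré map `g` of the single-cow model, acting on points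
`(x, y; θ)` of the boundary of the square `[δ,1]²` together with a state label.
Powers are real powers (`Real.rpow`). -/
noncomputable def g (α1 α2 β1 β2 δ : ℝ) : ℝ × ℝ × CowState → ℝ × ℝ × CowState
  | (_x, y, .E) =>
      if δ ^ (β1 / α2) ≤ y then (y ^ (α2 / β1), 1, R)
      else (δ, δ ^ (-(β1 / α2)) * y, S)
  | (x, _y, .R) =>
      if δ ^ (α1 / β2) ≤ x then (1, x ^ (β2 / α1), E)
      else (δ ^ (-(α1 / β2)) * x, δ, S)
  | (x, y, .S) =>
      if x = δ then
        -- on the edge `x = δ`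
        (if y ≤ δ ^ (β1 / α1) then (1, δ ^ (-(β1 / α1)) * y, E)
         else (y ^ (-(α1 / β1)) * δ, 1, R))
      else
        -- on the edge `y = δ`
        (if δ ^ (α1 / β1) ≤ x then (1, x ^ (-(β1 / α1)) * δ, E)
         else (δ ^ (-(α1 / β1)) * x, 1, R))

/-- The Poincaré section `Σ = {(1,y;E) : δ ≤ y ≤ 1} ∪ {(x,1;R) : δ ≤ x < 1}`. -/
def inSigma (δ : ℝ) : ℝ × ℝ × CowState → Prop
  | (x, y, .E) => x = 1 ∧ δ ≤ y ∧ y ≤ 1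
  | (x, y, .R) => δ ≤ x ∧ x < 1 ∧ y = 1
  | (_, _, .S) => False

/-- The first-return map `f` on the Poincaré section `Σ`:
`f(w) = g(w)` if `g(w) ∈ Σ`, and `f(w) = g(g(w))` otherwise. -/
noncomputable def f (α1 α2 β1 β2 δ : ℝ) (w : ℝ × ℝ × CowState) : ℝ × ℝ × CowState := by
  classical
  exact if inSigma δ (g α1 α2 β1 β2 δ w) then g α1 α2 β1 β2 δ w
        else g α1 α2 β1 β2 δ (g α1 α2 β1 β2 δ w)

/-- if `δ ≤ y < 1` satisfies the branch conditions
`y < δ^(β1/α2)`, `δ^(−β1/α2)·y > δ^(β1/α1)`, and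
`(δ^(−β1/α2)·y)^(−α1/β1)·δ ≥ δ^(α1/β2)` (state pattern E → S → R → E), and
`g³(1,y;E) = (1,y;E)`, then `y = δ^((1/α1+1/α2)/(1/β1+1/β2))`.  Hence for
fixed parameters there is at most one period-two orbit of the first-return map
of type E → S → R → E. -/
theorem period_two_ESRE_unique
    (α1 α2 β1 β2 δ : ℝ)
    (hα1 : 0 < α1) (hα2 : 0 < α2) (hβ1 : 0 < β1) (hβ2 : 0 < β2)
    (hδ0 : 0 < δ) (hδ1 : δ < 1)
    (y : ℝ) (hyl : δ ≤ y) (hyu : y < 1)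
    (hb1 : y < δ ^ (β1 / α2))
    (hb2 : δ ^ (β1 / α1) < δ ^ (-(β1 / α2)) * y)
    (hb3 : δ ^ (α1 / β2) ≤ (δ ^ (-(β1 / α2)) * y) ^ (-(α1 / β1)) * δ)
    (hfix : (g α1 α2 β1 β2 δ)^[3] (1, y, E) = (1, y, E)) :
    y = δ ^ ((1 / α1 + 1 / α2) / (1 / β1 + 1 / β2)) := by
  have hy0 : 0 < y := lt_of_lt_of_le hδ0 hyl
  set y' : ℝ := δ ^ (-(β1 / α2)) * y with hy'
  have hy'0 : 0 < y' := mul_pos (Real.rpow_pos_of_pos hδ0 _) hy0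
  set x'' : ℝ := y' ^ (-(α1 / β1)) * δ with hx''
  have hx''0 : 0 < x'' := mul_pos (Real.rpow_pos_of_pos hy'0 _) hδ0
  have hδy' : y' ≠ δ ^ (β1 / α1) := ne_of_gt hb2
  have h1 : g α1 α2 β1 β2 δ (1, y, E) = (δ, y', S) := by
    simp [g, not_le.2 hb1]
    exact hy'.symm
  have h2 : g α1 α2 β1 β2 δ (δ, y', S) = (x'', 1, R) := by
    simp [g, not_le.2 hb2]
    exact hx''.symm
  have h3 : g α1 α2 β1 β2 δ (x'', 1, R) = (1, x'' ^ (β2 / α1), E) := by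
    simp [g, hb3]
  have hkey : x'' ^ (β2 / α1) = y := by
    have : (g α1 α2 β1 β2 δ)^[3] (1, y, E) = (1, x'' ^ (β2 / α1), E) := by
      simp [Function.iterate_succ, Function.comp, h1, h2, h3]
    rw [this] at hfix
    exact (Prod.ext_iff.1 (Prod.ext_iff.1 hfix).2).1
  -- take logs
  have hlog : Real.log y = (β2 / α1) * Real.log x'' := by
    rw [← hkey, Real.log_rpow hx''0]
  have hlx : Real.log x'' = -(α1 / β1) * Real.log y' + Real.log δ := by
    rw [hx'', Real.log_mul (ne_of_gt (Real.rpow_pos_of_pos hy'0 _)) (ne_of_gt hδ0),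
      Real.log_rpow hy'0]
  have hly : Real.log y' = -(β1 / α2) * Real.log δ + Real.log y := by
    rw [hy', Real.log_mul (ne_of_gt (Real.rpow_pos_of_pos hδ0 _)) (ne_of_gt hy0),
      Real.log_rpow hδ0]
  set t := Real.log y
  set L := Real.log δ
  have heq : t = (β2 / α1) * (-(α1 / β1) * (-(β1 / α2) * L + t) + L) := by
    rw [hlx, hly] at hlog; exact hlog
  have ha1 := hα1.ne'
  have ha2 := hα2.ne'
  have hb1' := hβ1.ne'
  have hb2' := hβ2.ne'
  have htL : t = ((1 / α1 + 1 / α2) / (1 / β1 + 1 / β2)) * L := by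
    have hden : (1 / β1 + 1 / β2) ≠ 0 := by positivity
    field_simp at heq ⊢
    ring_nf at heq ⊢
    nlinarith [heq, sq_nonneg (t - L)]
  have : y = Real.exp (((1 / α1 + 1 / α2) / (1 / β1 + 1 / β2)) * L) := by
    rw [← htL, Real.exp_log hy0]
  rw [this, Real.rpow_def_of_pos hδ0, mul_comm]
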